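/- Let α, β : J → J be additive maps satisfying α(xy) = xα(y), β(yx) = β(y)x, and α(y)z + yβ(z) = 0 for all x ∈ K, y, z ∈ J. Then the map Γ : R → R sending a matrix [a_{i,j}] to Σ_{i=1}^{n} α(a_{i,n})e_{i,1} + Σ_{j=1}^{n} β(a_{1,j})e_{n,j} (so that ye_{1,n} ↦ α(y)e_{1,1} + β(y)e_{n,n}, ye_{i,n} ↦ α(y)e_{i,1} for 1 < i ≤ n, ye_{1,j} ↦ β(y)e_{n,j} for 1 ≤ j < n, and all other entries map to 0) is a derivation of R (not merely a Lie derivation). -/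

import Mathlib

/-!
With `E = e_{n,1}` and `α`, `β` applied entrywise, the map is `Γ(A) = α(A) E + E β(A)`.
Right multiplication by `E` only sees the last column and left multiplication only the first
row, and there the one-sided linearity of `α` and `β` gives `α(AB) E = A α(B) E` and
`E β(AB) = E β(A) B`. Hence `Γ(A) B + A Γ(B) - Γ(AB) = α(A) E B + A E β(B)`, whose `(i, j)`
entry is `α(a_{i,n}) b_{1,j} + a_{i,n} β(b_{1,j}) = 0`.
-/

/-- Membership in `R = R_n(K,J)`: entries on and above the main diagonal lie in `J`. -/
def Rmem {K : Type*} [Ring K] {n : ℕ} (J : AddSubgroup K)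
    (M : Matrix (Fin n) (Fin n) K) : Prop :=
  ∀ i j : Fin n, i ≤ j → M i j ∈ J

namespace Matrix

section single

variable {l m n R : Type*} [DecidableEq m] [Fintype m] [NonUnitalNonAssocSemiring R]

theorem mul_single_apply [DecidableEq n] (M : Matrix l m R) (i : m) (j : n) (c : R) (a : l)
    (b : n) : (M * single i j c) a b = if b = j then M a i * c else 0 := by
  split_ifs with hb
  · rw [hb, mul_single_apply_same]
  · exact mul_single_apply_of_ne c i j a b hb M

theorem single_mul_apply [DecidableEq l] (M : Matrix m n R) (i : l) (j : m) (c : R) (a : l)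
    (b : n) : (single i j c * M) a b = if a = i then c * M j b else 0 := by
  split_ifs with ha
  · rw [ha, single_mul_apply_same]
  · exact single_mul_apply_of_ne c i j a b ha M

end single

section almostAnnihilator

variable {ι K : Type*} [Fintype ι] [DecidableEq ι] [Ring K] (α β : K →+ K) (p q : ι)

def almostAnnihilatorMap (A : Matrix ι ι K) : Matrix ι ι K :=
  A.map α * single q p 1 + single q p 1 * A.map β

theorem almostAnnihilatorMap_apply (A : Matrix ι ι K) (a b : ι) :
    almostAnnihilatorMap α β p q A a b =
      (if b = p then α (A a q) else 0) + (if a = q then β (A p b) else 0) := by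
  simp [almostAnnihilatorMap, mul_single_apply, single_mul_apply]

theorem sum_single_add_sum_single_eq_almostAnnihilatorMap (A : Matrix ι ι K) :
    ∑ i, single i p (α (A i q)) + ∑ j, single q j (β (A p j)) =
      almostAnnihilatorMap α β p q A := by
  ext a b
  simp [almostAnnihilatorMap_apply, sum_apply, single_apply, eq_comm, ite_and]

theorem almostAnnihilatorMap_add (A B : Matrix ι ι K) :
    almostAnnihilatorMap α β p q (A + B) =
      almostAnnihilatorMap α β p q A + almostAnnihilatorMap α β p q B := by
  simp only [almostAnnihilatorMap, Matrix.map_add α (_root_.map_add α),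
    Matrix.map_add β (_root_.map_add β), add_mul, mul_add]
  abel

theorem almostAnnihilatorMap_mul {A B : Matrix ι ι K}
    (hα : ∀ x k, α (x * B k q) = x * α (B k q))
    (hβ : ∀ x k, β (A p k * x) = β (A p k) * x)
    (hαβ : ∀ a b, α (A a q) * B p b + A a q * β (B p b) = 0) :
    almostAnnihilatorMap α β p q (A * B) =
      almostAnnihilatorMap α β p q A * B + A * almostAnnihilatorMap α β p q B := by
  have hcol : (A * B).map α * single q p 1 = A * B.map α * single q p 1 := by
    ext a b
    rw [mul_single_apply, mul_single_apply]
    split_ifs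
    · simp only [map_apply, mul_apply, _root_.map_sum, hα]
    · rfl
  have hrow : single q p 1 * (A * B).map β = single q p 1 * (A.map β * B) := by
    ext a b
    rw [single_mul_apply, single_mul_apply]
    split_ifs
    · simp only [map_apply, mul_apply, _root_.map_sum, hβ]
    · rfl
  have hcancel : A.map α * (single q p 1 * B) + A * (single q p 1 * B.map β) = 0 := by
    ext a b
    rw [add_apply, zero_apply, mul_apply, mul_apply]
    simpa only [single_mul_apply, map_apply, mul_ite, mul_zero, one_mul, Finset.sum_ite_eq',
      Finset.mem_univ, if_true] using hαβ a b
  simp only [almostAnnihilatorMap, hcol, hrow, Matrix.mul_assoc, add_mul, mul_add]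
  calc _ = A * (B.map α * single q p 1) + single q p 1 * (A.map β * B) +
        (A.map α * (single q p 1 * B) + A * (single q p 1 * B.map β)) := by
          rw [hcancel, add_zero]
    _ = _ := by abel

end almostAnnihilator

theorem rmem_almostAnnihilatorMap {K : Type*} [Ring K] {n : ℕ} {J : AddSubgroup K}
    (α β : K →+ K) {p q : Fin n}
    (hp : ∀ j, p ≤ j) (hq : ∀ i, i ≤ q) (hpq : p ≠ q)
    (hαJ : ∀ y ∈ J, α y ∈ J) (hβJ : ∀ y ∈ J, β y ∈ J) {A : Matrix (Fin n) (Fin n) K}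
    (hA : Rmem J A) : Rmem J (almostAnnihilatorMap α β p q A) := by
  intro a b hab
  rw [almostAnnihilatorMap_apply]
  split_ifs with hb ha ha
  · rw [ha, hb] at hab
    exact absurd (le_antisymm (hp q) hab) hpq
  · rw [add_zero]
    exact hαJ _ (hA a q (hq a))
  · rw [zero_add]
    exact hβJ _ (hA p b (hp b))
  · rw [add_zero]
    exact J.zero_mem

end Matrix

/-- The almost annihilator map
`[a_{i,j}] ↦ Σ_i α(a_{i,n}) e_{i,1} + Σ_j β(a_{1,j}) e_{n,j}` is a (full, not merely Lie)
derivation of `R`, given `α, β : J → J` additive with `α(xy) = xα(y)`, `β(yx) = β(y)x`,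
and `α(y)z + yβ(z) = 0`. -/
theorem almost_annihilator_derivation {K : Type*} [Ring K] {n : ℕ} (hn : 3 ≤ n)
    (J : AddSubgroup K)
    (α β : K →+ K)
    (hαJ : ∀ y ∈ J, α y ∈ J) (hβJ : ∀ y ∈ J, β y ∈ J)
    (hα : ∀ x : K, ∀ y ∈ J, α (x * y) = x * α y)
    (hβ : ∀ x : K, ∀ y ∈ J, β (y * x) = β y * x)
    (hαβ : ∀ y ∈ J, ∀ z ∈ J, α y * z + y * β z = 0) :
    (∀ A : Matrix (Fin n) (Fin n) K, Rmem J A →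
        Rmem J ((∑ i : Fin n, Matrix.single i ⟨0, by omega⟩ (α (A i ⟨n - 1, by omega⟩))) +
          ∑ j : Fin n, Matrix.single ⟨n - 1, by omega⟩ j (β (A ⟨0, by omega⟩ j)))) ∧
    (∀ A B : Matrix (Fin n) (Fin n) K, Rmem J A → Rmem J B →
        ((∑ i : Fin n, Matrix.single i ⟨0, by omega⟩ (α ((A + B) i ⟨n - 1, by omega⟩))) +
          ∑ j : Fin n, Matrix.single ⟨n - 1, by omega⟩ j (β ((A + B) ⟨0, by omega⟩ j))) =
        ((∑ i : Fin n, Matrix.single i ⟨0, by omega⟩ (α (A i ⟨n - 1, by omega⟩))) +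
          ∑ j : Fin n, Matrix.single ⟨n - 1, by omega⟩ j (β (A ⟨0, by omega⟩ j))) +
        ((∑ i : Fin n, Matrix.single i ⟨0, by omega⟩ (α (B i ⟨n - 1, by omega⟩))) +
          ∑ j : Fin n, Matrix.single ⟨n - 1, by omega⟩ j (β (B ⟨0, by omega⟩ j)))) ∧
    (∀ A B : Matrix (Fin n) (Fin n) K, Rmem J A → Rmem J B →
        ((∑ i : Fin n, Matrix.single i ⟨0, by omega⟩ (α ((A * B) i ⟨n - 1, by omega⟩))) +
          ∑ j : Fin n, Matrix.single ⟨n - 1, by omega⟩ j (β ((A * B) ⟨0, by omega⟩ j))) =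
        ((∑ i : Fin n, Matrix.single i ⟨0, by omega⟩ (α (A i ⟨n - 1, by omega⟩))) +
          ∑ j : Fin n, Matrix.single ⟨n - 1, by omega⟩ j (β (A ⟨0, by omega⟩ j))) * B +
        A * ((∑ i : Fin n, Matrix.single i ⟨0, by omega⟩ (α (B i ⟨n - 1, by omega⟩))) +
          ∑ j : Fin n, Matrix.single ⟨n - 1, by omega⟩ j (β (B ⟨0, by omega⟩ j)))) := by
  set p : Fin n := ⟨0, by omega⟩
  set q : Fin n := ⟨n - 1, by omega⟩
  have hp : ∀ j, p ≤ j := fun j => Fin.le_def.2 (Nat.zero_le _)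
  have hq : ∀ i, i ≤ q := fun i => Fin.le_def.2 (by simp only [q]; omega)
  have hpq : p ≠ q := fun h => by simp only [p, q, Fin.mk.injEq] at h; omega
  simp only [Matrix.sum_single_add_sum_single_eq_almostAnnihilatorMap]
  exact ⟨fun A hA => Matrix.rmem_almostAnnihilatorMap α β hp hq hpq hαJ hβJ hA,
    fun A B _ _ => Matrix.almostAnnihilatorMap_add α β p q A B,
    fun A B hA hB => Matrix.almostAnnihilatorMap_mul α β p q
      (fun x k => hα x _ (hB k q (hq k))) (fun x k => hβ x _ (hA p k (hp k)))
      (fun a b => hαβ _ (hA a q (hq a)) _ (hB p b (hp b)))⟩
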